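/- arXiv:2204.03841 — 3 statements merged into one kernel-verified Lean document; each statement's English description precedes it below -/
import Mathlib

section
/- In the threshold model with linear difficulty function, i.e., P(Y > y) = F(α(θ - δ₀ - δ y)) with F a continuous strictly increasing cdf having finite mean μ_F, the expectation of Y equals (θ - δ₀ - μ_F/α)/δ. In particular E(Y) is an affine function of θ with slope 1/δ. -/
open MeasureTheory Set Filter Topology

-- continuous CDF implies measure of strict sublevel set equals F too
lemma lt_level (Ω₀ : Type*) [MeasurableSpace Ω₀] (μ₀ : Measure Ω₀) [IsProbabilityMeasure μ₀]
    (Y₀ : Ω₀ → ℝ) (hY₀ : Measurable Y₀) (F : ℝ → ℝ) (hFc : Continuous F)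
    (hF : ∀ x, (μ₀ {ω | Y₀ ω ≤ x}).toReal = F x) (c : ℝ) :
    (μ₀ {ω | Y₀ ω < c}).toReal = F c := by
  set s : ℕ → Set Ω₀ := fun n => {ω | Y₀ ω ≤ c - 1 / (n + 1)} with hs
  have hmono : Monotone s := by
    intro m n hmn ω hω
    simp only [hs, mem_setOf_eq] at *
    have : (1 : ℝ) / (n + 1) ≤ 1 / (m + 1) := by
      apply one_div_le_one_div_of_le <;> [positivity; exact_mod_cast by omega]
    linarith
  have hU : (⋃ n, s n) = {ω | Y₀ ω < c} := by
    ext ω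
    simp only [mem_iUnion, hs, mem_setOf_eq]
    constructor
    · rintro ⟨n, hn⟩
      have : (0:ℝ) < 1 / (n + 1) := by positivity
      linarith
    · intro h
      obtain ⟨n, hn⟩ := exists_nat_one_div_lt (show 0 < c - Y₀ ω by linarith)
      exact ⟨n, by push_cast at hn ⊢; linarith⟩
  have ht : Tendsto (fun n => μ₀ (s n)) atTop (𝓝 (μ₀ {ω | Y₀ ω < c})) := by
    rw [← hU]; exact tendsto_measure_iUnion_atTop hmono
  have ht' : Tendsto (fun n => (μ₀ (s n)).toReal) atTop (𝓝 ((μ₀ {ω | Y₀ ω < c}).toReal)) :=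
    (ENNReal.tendsto_toReal (measure_ne_top _ _)).comp ht
  have ht'' : Tendsto (fun n : ℕ => F (c - 1 / (n + 1))) atTop (𝓝 (F c)) := by
    apply hFc.continuousAt.tendsto.comp
    have : Tendsto (fun n : ℕ => (1 : ℝ) / (n + 1)) atTop (𝓝 0) :=
      tendsto_one_div_add_atTop_nhds_zero_nat
    have := (tendsto_const_nhds (x := c)).sub this
    simpa using this
  have heq : (fun n => (μ₀ (s n)).toReal) = fun n : ℕ => F (c - 1 / (n + 1)) := by
    funext n; exact hF _
  rw [heq] at ht'
  exact tendsto_nhds_unique ht' ht''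

/-- In the linear threshold model, `E Y = (θ - δ₀ - μF/α)/δ`, an affine function of `θ`. -/
theorem mean_of_linear_threshold (Ω : Type*) [MeasurableSpace Ω] (μ : Measure Ω)
    [IsProbabilityMeasure μ] (Y : Ω → ℝ) (hY : Measurable Y) (hYint : Integrable Y μ)
    (Ω₀ : Type*) [MeasurableSpace Ω₀] (μ₀ : Measure Ω₀) [IsProbabilityMeasure μ₀]
    (Y₀ : Ω₀ → ℝ) (hY₀ : Measurable Y₀) (hY₀int : Integrable Y₀ μ₀)
    (F : ℝ → ℝ) (hFc : Continuous F) (hFm : StrictMono F)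
    (hF : ∀ x, (μ₀ {ω | Y₀ ω ≤ x}).toReal = F x)
    (μF : ℝ) (hμF : μF = ∫ ω, Y₀ ω ∂μ₀)
    (α δ θ δ₀ : ℝ) (hα : 0 < α) (hδ : 0 < δ)
    (hsurv : ∀ y, (μ {ω | y < Y ω}).toReal = F (α * (θ - δ₀ - δ * y))) :
    ∫ ω, Y ω ∂μ = (θ - δ₀ - μF / α) / δ := by
  set Z : Ω₀ → ℝ := fun ω => (θ - δ₀ - Y₀ ω / α) / δ with hZ
  have hZm : Measurable Z := by measurability
  -- survival functions agree, hence distributions agree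
  have hkey : ∀ y, μ {ω | y < Y ω} = μ₀ {ω | y < Z ω} := by
    intro y
    have h1 : {ω | y < Z ω} = {ω | Y₀ ω < α * (θ - δ₀ - δ * y)} := by
      ext ω
      simp only [hZ, mem_setOf_eq]
      rw [lt_div_iff₀ hδ, lt_sub_comm, div_lt_iff₀ hα]
      constructor <;> intro h <;> nlinarith
    have h2 : (μ₀ {ω | y < Z ω}).toReal = F (α * (θ - δ₀ - δ * y)) := by
      rw [h1]; exact lt_level Ω₀ μ₀ Y₀ hY₀ F hFc hF _
    have := (hsurv y).trans h2.symm
    exact (ENNReal.toReal_eq_toReal_iff' (measure_ne_top _ _) (measure_ne_top _ _)).mp this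
  have hmap : μ.map Y = μ₀.map Z := by
    refine Measure.ext_of_Iic _ _ (fun a => ?_)
    rw [Measure.map_apply hY measurableSet_Iic, Measure.map_apply hZm measurableSet_Iic]
    have cY : {ω | a < Y ω} = (Y ⁻¹' Iic a)ᶜ := by ext ω; simp [not_le]
    have cZ : {ω | a < Z ω} = (Z ⁻¹' Iic a)ᶜ := by ext ω; simp [not_le]
    have h := hkey a
    rw [cY, cZ] at h
    rw [measure_compl (hY measurableSet_Iic) (measure_ne_top _ _),
        measure_compl (hZm measurableSet_Iic) (measure_ne_top _ _)] at h
    have h1 : μ (Y ⁻¹' Iic a) ≤ 1 := prob_le_one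
    have h2 : μ₀ (Z ⁻¹' Iic a) ≤ 1 := prob_le_one
    rw [measure_univ, measure_univ] at h
    exact ((ENNReal.cancel_of_ne ENNReal.one_ne_top).tsub_right_inj
      (ENNReal.cancel_of_ne (measure_ne_top _ _)) (ENNReal.cancel_of_ne (measure_ne_top _ _))
      h1 h2).mp h
  have hint : ∫ ω, Y ω ∂μ = ∫ ω, Z ω ∂μ₀ := by
    have h1 : ∫ x, id x ∂(μ.map Y) = ∫ ω, Y ω ∂μ :=
      integral_map hY.aemeasurable aestronglyMeasurable_id
    have h2 : ∫ x, id x ∂(μ₀.map Z) = ∫ ω, Z ω ∂μ₀ :=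
      integral_map hZm.aemeasurable aestronglyMeasurable_id
    rw [← h1, ← h2, hmap]
  rw [hint, hZ]
  have hZi : Integrable (fun ω => Y₀ ω / α) μ₀ := hY₀int.div_const α
  rw [integral_div, integral_sub (integrable_const _) hZi, integral_div, integral_const]
  simp [hμF]
end

section
/- Under the threshold model P(Y > y) = F(α(θ - δ(y))) with δ a strictly increasing bijection onto ℝ and F a continuous strictly increasing cdf with finite mean μ_F, the expectation of the transformed variable satisfies E(δ(Y)) = θ - μ_F/α. -/
open MeasureTheory Set
open Filter Topology ProbabilityTheory

/-!
Since `d` is strictly increasing on `S` and maps `S` onto `ℝ`, the survival function of `d (Y)` is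
`z ↦ P(Y > d⁻¹ z) = F (α (θ - z))`. Because `F` is continuous, this is also the survival function
of `θ - Y₀ / α`, so `d (Y)` and `θ - Y₀ / α` are identically distributed and have the same mean
`θ - μF / α`.
-/

lemma measure_lt_eq_measure_le_of_continuousWithinAt {Ω : Type*} [MeasurableSpace Ω]
    {μ : Measure Ω} [IsFiniteMeasure μ] {X : Ω → ℝ} {x : ℝ}
    (hcdf : ContinuousWithinAt (fun t => (μ {ω | X ω ≤ t}).toReal) (Iio x) x) :
    μ {ω | X ω < x} = μ {ω | X ω ≤ x} := by
  have hlim : Tendsto (fun t => μ {ω | X ω ≤ t}) (𝓝[<] x) (𝓝 (μ {ω | X ω ≤ x})) :=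
    (ENNReal.tendsto_toReal_iff (fun _ => measure_ne_top _ _) (measure_ne_top _ _)).1 hcdf
  refine le_antisymm (measure_mono (ofPred_subset_ofPred.2 fun _ => le_of_lt))
    (le_of_tendsto hlim (eventually_nhdsWithin_of_forall fun t ht => ?_))
  exact measure_mono (ofPred_subset_ofPred.2 fun _ h => h.trans_lt ht)

lemma identDistrib_of_measure_lt_eq {Ω Ω' α : Type*} [MeasurableSpace Ω] [MeasurableSpace Ω']
    [TopologicalSpace α] [SecondCountableTopology α] [LinearOrder α] [OrderTopology α]
    [MeasurableSpace α] [BorelSpace α]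
    {μ : Measure Ω} {ν : Measure Ω'} [IsProbabilityMeasure μ] [IsProbabilityMeasure ν]
    {X : Ω → α} {X' : Ω' → α} (hX : AEMeasurable X μ) (hX' : AEMeasurable X' ν)
    (hsurv : ∀ z, μ {ω | z < X ω} = ν {ω | z < X' ω}) :
    IdentDistrib X X' μ ν := by
  refine ⟨hX, hX', Measure.ext_of_Iic _ _ fun z => ?_⟩
  rw [Measure.map_apply₀ hX measurableSet_Iic.nullMeasurableSet,
    Measure.map_apply₀ hX' measurableSet_Iic.nullMeasurableSet, ← compl_Ioi, preimage_compl,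
    preimage_compl, prob_compl_eq_one_sub₀ (hX.nullMeasurableSet_preimage measurableSet_Ioi),
    prob_compl_eq_one_sub₀ (hX'.nullMeasurableSet_preimage measurableSet_Ioi)]
  exact congrArg (1 - ·) (hsurv z)

theorem mean_transformed_general (Ω : Type*) [MeasurableSpace Ω] (μ : Measure Ω)
    [IsProbabilityMeasure μ] (Y : Ω → ℝ)
    (Ω₀ : Type*) [MeasurableSpace Ω₀] (μ₀ : Measure Ω₀) [IsProbabilityMeasure μ₀]
    (Y₀ : Ω₀ → ℝ) (hY₀int : Integrable Y₀ μ₀)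
    (F : ℝ → ℝ) (hFc : Continuous F)
    (hF : ∀ x, (μ₀ {ω | Y₀ ω ≤ x}).toReal = F x)
    (μF : ℝ) (hμF : μF = ∫ ω, Y₀ ω ∂μ₀)
    (S : Set ℝ)
    (d : ℝ → ℝ) (hd : StrictMonoOn d S) (hdS : d '' S = univ)
    (α θ : ℝ) (hα : 0 < α)
    (hYS : ∀ ω, Y ω ∈ S)
    (hsurv : ∀ y ∈ S, (μ {ω | y < Y ω}).toReal = F (α * (θ - d y)))
    (hint : Integrable (fun ω => d (Y ω)) μ) :
    ∫ ω, d (Y ω) ∂μ = θ - μF / α := by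
  have hcdf : Continuous fun t => (μ₀ {ω | Y₀ ω ≤ t}).toReal := by simpa only [hF] using hFc
  have hsurv₀ : ∀ z, μ₀ {ω | z < θ - Y₀ ω / α} = ENNReal.ofReal (F (α * (θ - z))) := fun z => by
    have hset : {ω | z < θ - Y₀ ω / α} = {ω | Y₀ ω < α * (θ - z)} := by
      ext ω
      simp only [mem_ofPred_eq, lt_sub_iff_add_lt', ← lt_sub_iff_add_lt, div_lt_iff₀ hα, mul_comm]
    rw [hset, measure_lt_eq_measure_le_of_continuousWithinAt hcdf.continuousAt.continuousWithinAt,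
      ← hF, ENNReal.ofReal_toReal (measure_ne_top _ _)]
  have hsurvd : ∀ z, μ {ω | z < d (Y ω)} = ENNReal.ofReal (F (α * (θ - z))) := fun z => by
    obtain ⟨y, hyS, rfl⟩ : z ∈ d '' S := hdS ▸ mem_univ z
    simp only [hd.lt_iff_lt hyS (hYS _), ← hsurv y hyS, ENNReal.ofReal_toReal (measure_ne_top _ _)]
  have hlaw : IdentDistrib (fun ω => d (Y ω)) (fun ω => θ - Y₀ ω / α) μ μ₀ :=
    identDistrib_of_measure_lt_eq hint.aemeasurable
      (aemeasurable_const.sub (hY₀int.aemeasurable.div_const α)) fun z => by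
        rw [hsurvd, hsurv₀]
  rw [hlaw.integral_eq, integral_sub (integrable_const θ) (hY₀int.div_const α), integral_const,
    integral_div, probReal_univ, one_smul, hμF]

/-- Under the threshold model `P(Y > y) = F (α (θ - d y))`, one has
`E (d Y) = θ - μF / α`, where `μF` is the mean of the distribution `F`. -/
theorem mean_transformed (Ω : Type*) [MeasurableSpace Ω] (μ : Measure Ω)
    [IsProbabilityMeasure μ] (Y : Ω → ℝ) (hY : Measurable Y)
    (Ω₀ : Type*) [MeasurableSpace Ω₀] (μ₀ : Measure Ω₀) [IsProbabilityMeasure μ₀]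
    (Y₀ : Ω₀ → ℝ) (hY₀ : Measurable Y₀) (hY₀int : Integrable Y₀ μ₀)
    (F : ℝ → ℝ) (hFc : Continuous F) (hFm : StrictMono F)
    (hFrange : ∀ x, F x ∈ Ioo (0 : ℝ) 1)
    (hF : ∀ x, (μ₀ {ω | Y₀ ω ≤ x}).toReal = F x)
    (μF : ℝ) (hμF : μF = ∫ ω, Y₀ ω ∂μ₀)
    (S : Set ℝ) (hSopen : IsOpen S) (hSconn : S.OrdConnected)
    (d : ℝ → ℝ) (hd : StrictMonoOn d S) (hdc : ContinuousOn d S) (hdS : d '' S = univ)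
    (α θ : ℝ) (hα : 0 < α)
    (hYS : ∀ ω, Y ω ∈ S)
    (hsurv : ∀ y ∈ S, (μ {ω | y < Y ω}).toReal = F (α * (θ - d y)))
    (hint : Integrable (fun ω => d (Y ω)) μ) :
    ∫ ω, d (Y ω) ∂μ = θ - μF / α :=
  mean_transformed_general Ω μ Y Ω₀ μ₀ Y₀ hY₀int F hFc hF μF hμF S d hd hdS α θ hα hYS hsurv hint
end

section
/- Under the threshold model P(Y > y) = F(α(θ - δ(y))) with δ a strictly increasing bijection onto ℝ and F a continuous strictly increasing cdf with finite variance var_F, the variance of δ(Y) equals var_F/α², independent of θ. -/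
open MeasureTheory Set ProbabilityTheory

/-!
Both `d ∘ Y` and `θ - Y₀ / α` have survival function `a ↦ F (α (θ - a))`: the first by
transporting the threshold model along the increasing bijection `d`, the second because a
continuous cdf has no atoms, so `P(Y₀ < x) = P(Y₀ ≤ x)`. Two real laws with the same survival
function coincide, so `Var (d ∘ Y) = Var (Y₀ / α) = var_F / α²`.
-/

lemma measure_singleton_eq_zero_of_continuousWithinAt_cdf (ν : Measure ℝ)
    [IsProbabilityMeasure ν] {x : ℝ} (hx : ContinuousWithinAt (cdf ν) (Iic x) x) : ν {x} = 0 := by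
  rw [← measure_cdf ν, StieltjesFunction.measure_singleton, hx.leftLim_eq, sub_self,
    ENNReal.ofReal_zero]

section

variable {Ω : Type*} [MeasurableSpace Ω] {μ : Measure Ω} {X : Ω → ℝ}

lemma measure_lt_toReal_eq_of_continuous_cdf [IsProbabilityMeasure μ] (hX : AEMeasurable X μ)
    {F : ℝ → ℝ} (hFc : Continuous F) (hF : ∀ x, (μ {ω | X ω ≤ x}).toReal = F x) (x : ℝ) :
    (μ {ω | X ω < x}).toReal = F x := by
  have := Measure.isProbabilityMeasure_map (μ := μ) hX
  have hcdf : cdf (μ.map X) = F := funext fun x => by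
    rw [cdf_eq_real, map_measureReal_apply_of_aemeasurable hX measurableSet_Iic, ← hF]; rfl
  have hx : μ.map X {x} = 0 :=
    measure_singleton_eq_zero_of_continuousWithinAt_cdf _ (hcdf ▸ hFc.continuousWithinAt)
  calc (μ {ω | X ω < x}).toReal = (μ.map X).real (Iio x) := by
        rw [map_measureReal_apply_of_aemeasurable hX measurableSet_Iio]; rfl
    _ = (μ.map X).real (Iic x) := measureReal_congr (Iio_ae_eq_Iic' hx)
    _ = F x := by rw [← cdf_eq_real, hcdf]

lemma identDistrib_of_measure_lt_toReal_eq [IsProbabilityMeasure μ] {Ω' : Type*}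
    [MeasurableSpace Ω'] {μ' : Measure Ω'} [IsProbabilityMeasure μ'] {X' : Ω' → ℝ}
    (hX : AEMeasurable X μ) (hX' : AEMeasurable X' μ')
    (h : ∀ a, (μ {ω | a < X ω}).toReal = (μ' {ω | a < X' ω}).toReal) :
    IdentDistrib X X' μ μ' := by
  refine ⟨hX, hX', Measure.ext_of_Iic _ _ fun a => ?_⟩
  have := Measure.isProbabilityMeasure_map hX
  have := Measure.isProbabilityMeasure_map hX'
  rw [← compl_Ioi, prob_compl_eq_one_sub measurableSet_Ioi,
    prob_compl_eq_one_sub measurableSet_Ioi,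
    Measure.map_apply_of_aemeasurable hX measurableSet_Ioi,
    Measure.map_apply_of_aemeasurable hX' measurableSet_Ioi]
  exact congrArg _ <|
    (ENNReal.toReal_eq_toReal_iff' (measure_ne_top _ _) (measure_ne_top _ _)).1 (h a)

lemma measure_lt_const_sub_div_toReal_eq [IsProbabilityMeasure μ] (hX : AEMeasurable X μ)
    {F : ℝ → ℝ} (hFc : Continuous F) (hF : ∀ x, (μ {ω | X ω ≤ x}).toReal = F x) {α : ℝ}
    (hα : 0 < α) (θ a : ℝ) :
    (μ {ω | a < θ - X ω / α}).toReal = F (α * (θ - a)) := by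
  have hset : {ω | a < θ - X ω / α} = {ω | X ω < α * (θ - a)} := by
    ext ω
    change a < θ - X ω / α ↔ X ω < α * (θ - a)
    rw [lt_sub_comm, div_lt_iff₀ hα, mul_comm]
  rw [hset]
  exact measure_lt_toReal_eq_of_continuous_cdf hX hFc hF _

lemma measure_lt_comp_toReal_eq {S : Set ℝ} {d : ℝ → ℝ} (hd : StrictMonoOn d S)
    (hdS : d '' S = univ) {Y : Ω → ℝ} (hYS : ∀ ω, Y ω ∈ S) {G : ℝ → ℝ}
    (hY : ∀ y ∈ S, (μ {ω | y < Y ω}).toReal = G (d y)) (a : ℝ) :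
    (μ {ω | a < d (Y ω)}).toReal = G a := by
  obtain ⟨y, hyS, rfl⟩ : a ∈ d '' S := hdS ▸ mem_univ a
  simp_rw [hd.lt_iff_lt hyS (hYS _)]
  exact hY y hyS

end

theorem variance_transformed_general (Ω : Type*) [MeasurableSpace Ω] (μ : Measure Ω)
    [IsProbabilityMeasure μ] (Y : Ω → ℝ)
    (Ω₀ : Type*) [MeasurableSpace Ω₀] (μ₀ : Measure Ω₀) [IsProbabilityMeasure μ₀]
    (Y₀ : Ω₀ → ℝ) (hY₀ : Measurable Y₀)
    (F : ℝ → ℝ) (hFc : Continuous F)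
    (hF : ∀ x, (μ₀ {ω | Y₀ ω ≤ x}).toReal = F x)
    (varF : ℝ) (hvarF : varF = variance Y₀ μ₀)
    (S : Set ℝ)
    (d : ℝ → ℝ) (hd : StrictMonoOn d S) (hdS : d '' S = univ)
    (α θ : ℝ) (hα : 0 < α)
    (hYS : ∀ ω, Y ω ∈ S)
    (hsurv : ∀ y ∈ S, (μ {ω | y < Y ω}).toReal = F (α * (θ - d y)))
    (hsq : MemLp (fun ω => d (Y ω)) 2 μ) :
    variance (fun ω => d (Y ω)) μ = varF / α ^ 2 := by
  have hlaw : IdentDistrib (fun ω => d (Y ω)) (fun ω => θ - Y₀ ω / α) μ μ₀ :=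
    identDistrib_of_measure_lt_toReal_eq hsq.aemeasurable (by fun_prop) fun a => by
      rw [measure_lt_comp_toReal_eq (G := fun a => F (α * (θ - a))) hd hdS hYS hsurv,
        measure_lt_const_sub_div_toReal_eq hY₀.aemeasurable hFc hF hα]
  rw [hlaw.variance_eq, variance_const_sub (by fun_prop)]
  simp_rw [div_eq_mul_inv]
  rw [variance_mul_const, hvarF, inv_pow]

/-- Under the threshold model `P(Y > y) = F (α (θ - d y))`, the variance of `d Y`
equals `var_F / α²`, independent of `θ`. -/
theorem variance_transformed (Ω : Type*) [MeasurableSpace Ω] (μ : Measure Ω)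
    [IsProbabilityMeasure μ] (Y : Ω → ℝ) (hY : Measurable Y)
    (Ω₀ : Type*) [MeasurableSpace Ω₀] (μ₀ : Measure Ω₀) [IsProbabilityMeasure μ₀]
    (Y₀ : Ω₀ → ℝ) (hY₀ : Measurable Y₀) (hY₀sq : MemLp Y₀ 2 μ₀)
    (F : ℝ → ℝ) (hFc : Continuous F) (hFm : StrictMono F)
    (hFrange : ∀ x, F x ∈ Ioo (0 : ℝ) 1)
    (hF : ∀ x, (μ₀ {ω | Y₀ ω ≤ x}).toReal = F x)
    (varF : ℝ) (hvarF : varF = variance Y₀ μ₀)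
    (S : Set ℝ) (hSopen : IsOpen S) (hSconn : S.OrdConnected)
    (d : ℝ → ℝ) (hd : StrictMonoOn d S) (hdc : ContinuousOn d S) (hdS : d '' S = univ)
    (α θ : ℝ) (hα : 0 < α)
    (hYS : ∀ ω, Y ω ∈ S)
    (hsurv : ∀ y ∈ S, (μ {ω | y < Y ω}).toReal = F (α * (θ - d y)))
    (hsq : MemLp (fun ω => d (Y ω)) 2 μ) :
    variance (fun ω => d (Y ω)) μ = varF / α ^ 2 :=
  variance_transformed_general Ω μ Y Ω₀ μ₀ Y₀ hY₀ F hFc hF varF hvarF S d hd hdS α θ hα hYS hsurv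
    hsq
end
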